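/- Let ρ₀ be an irrational number of type η < ∞. Then for every δ > 0, ∑_{ℓ=1}^m 1/(ℓ⟨ℓρ₀⟩) = O(m^{η−1+δ}) as m → ∞. -/

import Mathlib

open Filter

/-- `⟨x⟩`, the distance from `x` to the nearest integer:
`⟨x⟩ = min {x − ⌊x⌋, 1 − (x − ⌊x⌋)}`. -/
noncomputable def distNearestInt (x : ℝ) : ℝ := min (x - ⌊x⌋) (1 - (x - ⌊x⌋))

/-- The set of exponents `ζ ≥ 0` with `liminf_{p → ∞} p^ζ ⟨pρ⟩ = 0` (`p` a positive
integer); the liminf condition is expressed in its `ε`–`frequently` form. -/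
def typeSet (ρ : ℝ) : Set ℝ :=
  {ζ : ℝ | 0 ≤ ζ ∧ ∀ ε > 0, ∃ᶠ p : ℕ in atTop, (p : ℝ) ^ ζ * distNearestInt (p * ρ) < ε}

/-- An irrational number `ρ` is of type `η` if `η` is the supremum of `typeSet ρ`. -/
def IsOfType (ρ η : ℝ) : Prop := IsLUB (typeSet ρ) η

/-!
For `ζ > η` the type condition gives `⟨pρ₀⟩ ≥ c p^(-ζ)` for all `p ≥ 1`. Since
`|⟨x⟩ - ⟨y⟩| ≥ min ⟨x - y⟩ ⟨x + y⟩`, the numbers `⟨ℓρ₀⟩`, `1 ≤ ℓ ≤ N`, are pairwise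
`s`-separated points of `[s, 1/2]` with `s = c (2N)^(-ζ)`, so `∑_{ℓ ≤ N} 1/⟨ℓρ₀⟩` is at most
`s⁻¹` times a harmonic sum of length `1/s`, i.e. `O(N^(ζ + ε))`. Splitting `∑_{ℓ ≤ m}` at `m / 2`
and recursing converts this into the bound `O(m^(ζ + ε - 1))` for the weighted sum; the recursion
converges because Dirichlet's theorem forces `η ≥ 1`.
-/

open Finset Topology

lemma distNearestInt_eq_abs_sub_round (x : ℝ) : distNearestInt x = |x - round x| := by
  rw [abs_sub_round_eq_min, distNearestInt, Int.self_sub_floor]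

lemma distNearestInt_nonneg (x : ℝ) : 0 ≤ distNearestInt x :=
  (distNearestInt_eq_abs_sub_round x).symm ▸ abs_nonneg _

lemma distNearestInt_le_half (x : ℝ) : distNearestInt x ≤ 1 / 2 :=
  (distNearestInt_eq_abs_sub_round x).symm ▸ abs_sub_round x

lemma distNearestInt_le_abs_sub_intCast (x : ℝ) (n : ℤ) : distNearestInt x ≤ |x - n| :=
  (distNearestInt_eq_abs_sub_round x).symm ▸ round_le x n

lemma Irrational.distNearestInt_natCast_mul_pos {ρ : ℝ} (hρ : Irrational ρ) {p : ℕ}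
    (hp : p ≠ 0) : 0 < distNearestInt (p * ρ) := by
  rw [distNearestInt_eq_abs_sub_round, abs_pos, sub_ne_zero]
  exact (hρ.natCast_mul hp).ne_int _

lemma min_abs_sub_abs_add_le_abs_abs_sub_abs (u v : ℝ) :
    min |u - v| |u + v| ≤ |(|u| - |v|)| := by
  rcases abs_cases u with ⟨hu, -⟩ | ⟨hu, -⟩ <;> rcases abs_cases v with ⟨hv, -⟩ | ⟨hv, -⟩ <;>
    rw [hu, hv]
  · exact min_le_left _ _
  · exact (min_le_right _ _).trans_eq (by rw [sub_neg_eq_add])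
  · exact (min_le_right _ _).trans_eq (by rw [← abs_neg]; congr 1; ring)
  · exact (min_le_left _ _).trans_eq (by rw [← abs_neg]; congr 1; ring)

lemma min_distNearestInt_sub_add_le (x y : ℝ) :
    min (distNearestInt (x - y)) (distNearestInt (x + y)) ≤
      |distNearestInt x - distNearestInt y| := by
  rw [distNearestInt_eq_abs_sub_round x, distNearestInt_eq_abs_sub_round y]
  refine le_trans ?_ (min_abs_sub_abs_add_le_abs_abs_sub_abs _ _)
  gcongr
  · refine (distNearestInt_le_abs_sub_intCast _ (round x - round y)).trans_eq ?_
    push_cast; ring_nf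
  · refine (distNearestInt_le_abs_sub_intCast _ (round x + round y)).trans_eq ?_
    push_cast; ring_nf

lemma sum_inv_le_harmonic_of_separated {ι : Type*} (S : Finset ι) (f : ι → ℝ) {s M : ℝ}
    (hs : 0 < s) (hlow : ∀ i ∈ S, s ≤ f i) (hup : ∀ i ∈ S, f i ≤ M)
    (hsep : ∀ i ∈ S, ∀ j ∈ S, i ≠ j → s ≤ |f i - f j|) :
    ∑ i ∈ S, 1 / f i ≤ harmonic ⌊M / s⌋₊ / s := by
  -- `f i` lies in the `g i`-th interval of length `s`, and the separation makes `g` injective.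
  set g : ι → ℕ := fun i => ⌊f i / s⌋₊
  have hg_pos : ∀ i ∈ S, (1 : ℝ) ≤ g i := fun i hi =>
    Nat.one_le_cast.2 <| Nat.le_floor <| by rw [Nat.cast_one, one_le_div hs]; exact hlow i hi
  have hg_le : ∀ i ∈ S, g i * s ≤ f i := fun i hi =>
    (le_div_iff₀ hs).1 <| Nat.floor_le <| div_nonneg (hs.le.trans (hlow i hi)) hs.le
  have hg_lt : ∀ i, f i < (g i + 1) * s := fun i =>
    (div_lt_iff₀ hs).1 <| Nat.lt_floor_add_one _
  have hg_inj : Set.InjOn g S := by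
    intro i hi j hj hij
    by_contra hne
    have hfi := hg_le i hi
    have hfi' := hg_lt i
    have hfj := hg_le j hj
    have hfj' := hg_lt j
    rw [hij] at hfi hfi'
    exact (hsep i hi j hj hne).not_gt (abs_sub_lt_iff.2 ⟨by linarith, by linarith⟩)
  calc ∑ i ∈ S, 1 / f i ≤ ∑ i ∈ S, 1 / s * (1 / (g i : ℝ)) := by
        refine sum_le_sum fun i hi => ?_
        rw [one_div_mul_one_div, mul_comm]
        exact one_div_le_one_div_of_le (mul_pos (by linarith [hg_pos i hi]) hs) (hg_le i hi)
    _ = 1 / s * ∑ j ∈ S.image g, 1 / (j : ℝ) := by rw [sum_image hg_inj, mul_sum]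
    _ ≤ 1 / s * ∑ j ∈ Icc 1 ⌊M / s⌋₊, 1 / (j : ℝ) := by
        gcongr
        intro j hj
        obtain ⟨i, hi, rfl⟩ := mem_image.1 hj
        exact mem_Icc.2 ⟨Nat.one_le_cast.1 (hg_pos i hi),
          Nat.floor_le_floor <| div_le_div_of_nonneg_right (hup i hi) hs.le⟩
    _ = harmonic ⌊M / s⌋₊ / s := by
        simp [harmonic_eq_sum_Icc, div_eq_inv_mul]

lemma sum_inv_distNearestInt_le_harmonic (ρ : ℝ) (N : ℕ) {s : ℝ} (hs : 0 < s)
    (hlow : ∀ k ∈ Icc 1 (2 * N), s ≤ distNearestInt (k * ρ)) :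
    ∑ ℓ ∈ Icc 1 N, 1 / distNearestInt (ℓ * ρ) ≤ harmonic ⌊1 / s⌋₊ / s := by
  have hsep : ∀ a ∈ Icc 1 N, ∀ b ∈ Icc 1 N, a < b →
      s ≤ |distNearestInt (b * ρ) - distNearestInt (a * ρ)| := by
    intro a ha b hb hab
    rw [mem_Icc] at ha hb
    have hsub := hlow (b - a) (mem_Icc.2 ⟨by omega, by omega⟩)
    have hadd := hlow (b + a) (mem_Icc.2 ⟨by omega, by omega⟩)
    push_cast [hab.le] at hsub hadd
    rw [sub_mul] at hsub
    rw [add_mul] at hadd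
    exact (le_min hsub hadd).trans (min_distNearestInt_sub_add_le _ _)
  refine sum_inv_le_harmonic_of_separated _ _ hs
    (fun ℓ hℓ => hlow ℓ (mem_Icc.2 ⟨(mem_Icc.1 hℓ).1, by linarith [(mem_Icc.1 hℓ).2]⟩))
    (fun ℓ _ => (distNearestInt_le_half _).trans (by norm_num)) fun a ha b hb hab => ?_
  rcases hab.lt_or_gt with h | h
  · rw [abs_sub_comm]; exact hsep a ha b hb h
  · exact hsep b hb a ha h

lemma harmonic_le_rpow {t : ℝ} (ht : 0 < t) (n : ℕ) : (harmonic n : ℝ) ≤ (1 + 1 / t) * n ^ t := by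
  rcases n.eq_zero_or_pos with rfl | hn
  · simp [Real.zero_rpow ht.ne']
  have hn1 : (1 : ℝ) ≤ n := Nat.one_le_cast.2 hn
  calc (harmonic n : ℝ) ≤ 1 + Real.log n := harmonic_le_one_add_log n
    _ ≤ n ^ t + n ^ t / t :=
        add_le_add (Real.one_le_rpow hn1 ht.le) (Real.log_le_rpow_div (by positivity) ht)
    _ = (1 + 1 / t) * n ^ t := by ring

lemma sum_inv_distNearestInt_le_rpow {ρ ζ c t : ℝ} (hζ : 0 ≤ ζ) (hc : 0 < c) (ht : 0 < t)
    (hlow : ∀ p : ℕ, 1 ≤ p → c ≤ p ^ ζ * distNearestInt (p * ρ)) (N : ℕ) :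
    ∑ ℓ ∈ Icc 1 N, 1 / distNearestInt (ℓ * ρ) ≤
      (1 + 1 / t) * (2 ^ ζ / c) ^ (1 + t) * (N : ℝ) ^ (ζ * (1 + t)) := by
  rcases N.eq_zero_or_pos with rfl | hN
  · simp only [Icc_eq_empty_of_lt one_pos, sum_empty]
    positivity
  set x : ℝ := 2 ^ ζ / c * N ^ ζ with hx_def
  have hx : 0 < x := by positivity
  have hlow' : ∀ k ∈ Icc 1 (2 * N), 1 / x ≤ distNearestInt (k * ρ) := by
    intro k hk
    rw [mem_Icc] at hk
    have hk' : (k : ℝ) ≤ 2 * N := by exact_mod_cast hk.2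
    have hx' : 1 / x = c / (2 * N) ^ ζ := by
      rw [Real.mul_rpow zero_le_two N.cast_nonneg, hx_def, div_mul_eq_mul_div, one_div_div]
    rw [hx', div_le_iff₀ (by positivity), mul_comm]
    calc c ≤ k ^ ζ * distNearestInt (k * ρ) := hlow k hk.1
      _ ≤ (2 * N) ^ ζ * distNearestInt (k * ρ) := by
        gcongr
        exact distNearestInt_nonneg _
  calc ∑ ℓ ∈ Icc 1 N, 1 / distNearestInt (ℓ * ρ) ≤ harmonic ⌊x⌋₊ / (1 / x) := by
        simpa only [one_div_one_div] using
          sum_inv_distNearestInt_le_harmonic ρ N (one_div_pos.2 hx) hlow'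
    _ ≤ (1 + 1 / t) * ⌊x⌋₊ ^ t * x := by
        rw [one_div, div_inv_eq_mul]
        gcongr
        exact harmonic_le_rpow ht _
    _ ≤ (1 + 1 / t) * x ^ t * x := by
        gcongr
        exact Nat.floor_le hx.le
    _ = (1 + 1 / t) * (2 ^ ζ / c) ^ (1 + t) * (N : ℝ) ^ (ζ * (1 + t)) := by
        rw [mul_assoc, ← Real.rpow_add_one hx.ne', add_comm t, Real.mul_rpow (by positivity)
          (by positivity), ← Real.rpow_mul N.cast_nonneg, mul_assoc]

lemma exists_sum_div_le_rpow_of_sum_le_rpow {a : ℕ → ℝ} (ha : ∀ n, 0 ≤ a n) {B β : ℝ}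
    (hβ : 1 < β) (hS : ∀ N, ∑ ℓ ∈ Icc 1 N, a ℓ ≤ B * (N : ℝ) ^ β) :
    ∃ C, ∀ m, ∑ ℓ ∈ Icc 1 m, a ℓ / ℓ ≤ C * (m : ℝ) ^ (β - 1) := by
  have hB : 0 ≤ B := by simpa using (ha 1).trans (by simpa using hS 1)
  set r : ℝ := 2 ^ (β - 1)
  have hr : 1 < r := Real.one_lt_rpow one_lt_two (by linarith)
  -- The terms with `m / 2 < ℓ ≤ m` contribute at most `2 B m ^ (β - 1)`, and `C` is the fixed
  -- point of `C ↦ C / r + 2 B`.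
  set C := 2 * B * r / (r - 1) with hC_def
  have hC : 0 ≤ C := div_nonneg (by positivity) (by linarith)
  refine ⟨C, fun m => ?_⟩
  induction m using Nat.strong_induction_on with
  | _ m ih =>
  rcases m.eq_zero_or_pos with rfl | hm
  · simp [Real.zero_rpow (by linarith : β - 1 ≠ 0)]
  have hm' : (0 : ℝ) < m := Nat.cast_pos.2 hm
  have hlow : ∑ ℓ ∈ Icc 1 (m / 2), a ℓ / ℓ ≤ C / r * (m : ℝ) ^ (β - 1) := by
    calc ∑ ℓ ∈ Icc 1 (m / 2), a ℓ / ℓ ≤ C * ((m / 2 : ℕ) : ℝ) ^ (β - 1) :=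
          ih _ (Nat.div_lt_self hm one_lt_two)
      _ ≤ C * ((m : ℝ) / 2) ^ (β - 1) := by
          gcongr
          exact Nat.cast_div_le
      _ = C / r * (m : ℝ) ^ (β - 1) := by
          rw [Real.div_rpow hm'.le zero_le_two]
          ring
  have hhigh : ∑ ℓ ∈ Ioc (m / 2) m, a ℓ / ℓ ≤ 2 * B * (m : ℝ) ^ (β - 1) := by
    calc ∑ ℓ ∈ Ioc (m / 2) m, a ℓ / ℓ ≤ ∑ ℓ ∈ Ioc (m / 2) m, 2 / m * a ℓ := by
          refine sum_le_sum fun ℓ hℓ => ?_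
          rw [mem_Ioc] at hℓ
          have hℓ' : (0 : ℝ) < ℓ := by exact_mod_cast (Nat.zero_le _).trans_lt hℓ.1
          rw [div_eq_mul_one_div, mul_comm]
          refine mul_le_mul_of_nonneg_right ?_ (ha ℓ)
          rw [div_le_div_iff₀ hℓ' hm', one_mul]
          exact_mod_cast (by omega : m ≤ 2 * ℓ)
      _ ≤ ∑ ℓ ∈ Icc 1 m, 2 / m * a ℓ := by
          refine sum_le_sum_of_subset_of_nonneg (fun ℓ hℓ => ?_) fun ℓ _ _ => by
            have := ha ℓ; positivity
          rw [mem_Ioc] at hℓ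
          exact mem_Icc.2 ⟨by omega, hℓ.2⟩
      _ ≤ 2 / m * (B * m ^ β) := by rw [← mul_sum]; gcongr; exact hS m
      _ = 2 * B * (m : ℝ) ^ (β - 1) := by rw [Real.rpow_sub_one hm'.ne']; ring
  have hIcc : ∀ n, Icc 1 n = Ioc 0 n := fun n => Icc_add_one_left_eq_Ioc 0 n
  calc ∑ ℓ ∈ Icc 1 m, a ℓ / ℓ
      = ∑ ℓ ∈ Icc 1 (m / 2), a ℓ / ℓ + ∑ ℓ ∈ Ioc (m / 2) m, a ℓ / ℓ := by
        rw [hIcc, hIcc, sum_Ioc_consecutive _ (Nat.zero_le _) (Nat.div_le_self _ _)]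
    _ ≤ C / r * (m : ℝ) ^ (β - 1) + 2 * B * (m : ℝ) ^ (β - 1) := add_le_add hlow hhigh
    _ = C * (m : ℝ) ^ (β - 1) := by
        have hr1 : r - 1 ≠ 0 := (sub_pos.2 hr).ne'
        rw [hC_def]
        field_simp
        ring

lemma Irrational.frequently_natCast_mul_distNearestInt_lt_one {ρ : ℝ} (hρ : Irrational ρ) :
    ∃ᶠ p : ℕ in atTop, (p : ℝ) * distNearestInt (p * ρ) < 1 := by
  rw [frequently_atTop]
  intro a
  -- Dirichlet's theorem with `1 / (n + 1)` below `⟨pρ⟩` for all `0 < p < a` forces `p ≥ a`.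
  have hev : ∀ᶠ n : ℕ in atTop, 0 < n ∧ ∀ p ∈ Ioo 0 a, 1 / ((n : ℝ) + 1) < distNearestInt (p * ρ) :=
    (eventually_gt_atTop 0).and <| (eventually_all_finset _).2 fun p hp =>
      tendsto_one_div_add_atTop_nhds_zero_nat.eventually <| gt_mem_nhds <|
        hρ.distNearestInt_natCast_mul_pos (mem_Ioo.1 hp).1.ne'
  obtain ⟨n, hn, hsmall⟩ := hev.exists
  obtain ⟨p, hp, hpn, hdist⟩ := Real.exists_nat_abs_mul_sub_round_le ρ hn
  rw [← distNearestInt_eq_abs_sub_round] at hdist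
  refine ⟨p, ?_, ?_⟩
  · by_contra! hpa
    exact (hsmall p (mem_Ioo.2 ⟨hp, hpa⟩)).not_ge hdist
  · have hpn' : (p : ℝ) < n + 1 := by exact_mod_cast Nat.lt_succ_of_le hpn
    calc (p : ℝ) * distNearestInt (p * ρ) ≤ p * (1 / (n + 1)) := by gcongr
      _ < 1 := by rw [mul_one_div, div_lt_one (by positivity)]; exact hpn'

lemma Irrational.mem_typeSet_of_lt_one {ρ ζ : ℝ} (hρ : Irrational ρ) (hζ₀ : 0 ≤ ζ)
    (hζ₁ : ζ < 1) : ζ ∈ typeSet ρ := by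
  refine ⟨hζ₀, fun ε hε => ?_⟩
  have hsmall : ∀ᶠ p : ℕ in atTop, (p : ℝ) ^ (-(1 - ζ)) < ε :=
    ((tendsto_rpow_neg_atTop (by linarith)).comp tendsto_natCast_atTop_atTop).eventually
      (gt_mem_nhds hε)
  refine (hρ.frequently_natCast_mul_distNearestInt_lt_one.and_eventually
    (hsmall.and (eventually_gt_atTop 0))).mono fun p ⟨hp, hpε, hp₀⟩ => ?_
  have hp' : (0 : ℝ) < p := Nat.cast_pos.2 hp₀
  calc (p : ℝ) ^ ζ * distNearestInt (p * ρ)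
      = (p : ℝ) ^ (-(1 - ζ)) * (p * distNearestInt (p * ρ)) := by
        rw [← mul_assoc, ← Real.rpow_add_one hp'.ne']
        ring_nf
    _ ≤ (p : ℝ) ^ (-(1 - ζ)) := mul_le_of_le_one_right (by positivity) hp.le
    _ < ε := hpε

lemma IsOfType.one_le {ρ η : ℝ} (hρ : Irrational ρ) (h : IsOfType ρ η) : 1 ≤ η :=
  le_of_forall_lt_imp_le_of_dense fun ζ hζ =>
    (le_max_left ζ 0).trans <| h.1 <| hρ.mem_typeSet_of_lt_one (le_max_right ζ 0)
      (max_lt hζ one_pos)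

lemma exists_pos_le_of_eventually_le {f : ℕ → ℝ} {ε : ℝ} (hε : 0 < ε)
    (hev : ∀ᶠ p in atTop, ε ≤ f p) (hpos : ∀ p, 1 ≤ p → 0 < f p) :
    ∃ c > 0, ∀ p, 1 ≤ p → c ≤ f p := by
  obtain ⟨N, hN⟩ := eventually_atTop.1 hev
  have hsmall : ∀ᶠ c in 𝓝[>] (0 : ℝ), 0 < c ∧ c < ε ∧ ∀ p ∈ Ico 1 N, c < f p :=
    eventually_mem_nhdsWithin.and <| nhdsWithin_le_nhds <| (eventually_lt_nhds hε).and <|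
      (eventually_all_finset _).2 fun p hp => eventually_lt_nhds (hpos p (mem_Ico.1 hp).1)
  obtain ⟨c, hc₀, hcε, hcf⟩ := hsmall.exists
  refine ⟨c, hc₀, fun p hp => ?_⟩
  rcases lt_or_ge p N with hpN | hpN
  · exact (hcf p (mem_Ico.2 ⟨hp, hpN⟩)).le
  · exact hcε.le.trans (hN p hpN)

lemma Irrational.exists_pos_le_rpow_mul_distNearestInt {ρ ζ : ℝ} (hρ : Irrational ρ)
    (hζ : 0 ≤ ζ) (hnot : ζ ∉ typeSet ρ) :
    ∃ c > 0, ∀ p : ℕ, 1 ≤ p → c ≤ (p : ℝ) ^ ζ * distNearestInt (p * ρ) := by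
  simp only [typeSet, Set.mem_ofPred_eq, not_and, not_forall, not_frequently, not_lt] at hnot
  obtain ⟨ε, hε, hev⟩ := hnot hζ
  exact exists_pos_le_of_eventually_le hε hev fun p hp =>
    mul_pos (by positivity) (hρ.distNearestInt_natCast_mul_pos (by omega))

open Asymptotics in
/-- If `ρ₀` is an irrational number of (finite) type `η`, then for every `δ > 0`,
`∑_{ℓ=1}^m 1/(ℓ⟨ℓρ₀⟩) = O(m^{η−1+δ})` as `m → ∞`. -/
theorem sum_inv_distNearestInt_isBigO (ρ₀ η : ℝ)
    (hirr : Irrational ρ₀) (htype : IsOfType ρ₀ η) :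
    ∀ δ > (0 : ℝ),
      (fun m : ℕ => ∑ ℓ ∈ Finset.Icc 1 m, 1 / ((ℓ : ℝ) * distNearestInt (ℓ * ρ₀)))
        =O[atTop] (fun m : ℕ => (m : ℝ) ^ (η - 1 + δ)) := by
  intro δ hδ
  have hη : 1 ≤ η := htype.one_le hirr
  set ζ := η + δ / 2 with hζ_def
  set t := δ / 2 / ζ
  have hζ : 0 < ζ := by positivity
  have hβ : ζ * (1 + t) = η + δ := by rw [mul_one_add, mul_div_cancel₀ _ hζ.ne', hζ_def]; ring
  obtain ⟨c, hc, hlow⟩ := hirr.exists_pos_le_rpow_mul_distNearestInt hζ.le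
    fun h => (htype.1 h).not_gt (by linarith)
  have hS := sum_inv_distNearestInt_le_rpow (t := t) hζ.le hc (by positivity) hlow
  rw [hβ] at hS
  obtain ⟨C, hC⟩ := exists_sum_div_le_rpow_of_sum_le_rpow
    (fun n => one_div_nonneg.2 (distNearestInt_nonneg _)) (by linarith) hS
  refine isBigO_of_le' (c := C) _ fun m => ?_
  have hnonneg : ∀ ℓ : ℕ, 0 ≤ 1 / ((ℓ : ℝ) * distNearestInt (ℓ * ρ₀)) := fun ℓ =>
    one_div_nonneg.2 (mul_nonneg ℓ.cast_nonneg (distNearestInt_nonneg _))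
  rw [Real.norm_of_nonneg (sum_nonneg fun ℓ _ => hnonneg ℓ), Real.norm_of_nonneg (by positivity),
    show η - 1 + δ = η + δ - 1 by ring]
  simpa only [div_div, mul_comm] using hC m
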